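/- Let e be a substring of T with ext(e) = e, and let (l', r') = pos(e). Consider the set B = { (L, R) : l' ≤ L ≤ R ≤ r' and ext(T[L, R]) = e }. Then (l', r') ∈ B, and B is a staircase-shaped set: there exist integers l ≤ r and b, and a nondecreasing sequence of integers A_l ≤ A_{l+1} ≤ ⋯ ≤ A_r with A_r ≤ b, such that B = { (x, y) : l ≤ x ≤ r, A_x ≤ y ≤ b }. Equivalently, whenever (L, R) ∈ B and l' ≤ L₂ ≤ L ≤ R ≤ R₂ ≤ r', one also has (L₂, R₂) ∈ B. -/
import Mathlib


/-- `frag T i j` is the fragment `T[i, j]` of `T` (1-indexed, inclusive). -/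
def frag {α : Type*} (T : List α) (i j : ℕ) : List α := (T.drop (i - 1)).take (j - i + 1)

/-- `t` is a substring of `T`, i.e. `t = T[i, j]` for some `1 ≤ i ≤ j ≤ |T|`. -/
def IsSub {α : Type*} (T t : List α) : Prop :=
  ∃ i j : ℕ, 1 ≤ i ∧ i ≤ j ∧ j ≤ T.length ∧ frag T i j = t

/-- `occ T t` is the set of occurrences of `t` in `T`: pairs `(i, j)` with
`1 ≤ i ≤ j ≤ |T|` and `T[i, j] = t`. -/
def occ {α : Type*} (T t : List α) : Set (ℕ × ℕ) :=
  {p | 1 ≤ p.1 ∧ p.1 ≤ p.2 ∧ p.2 ≤ T.length ∧ frag T p.1 p.2 = t}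

/-- `Sset T t` is the set `S_t`: substrings `s` of `T` such that `t` occurs in `s`
and `|occ_T(t)| = |occ_T(s)|`. -/
def Sset {α : Type*} (T t : List α) : Set (List α) :=
  {s | IsSub T s ∧ (∃ a b : ℕ, 1 ≤ a ∧ a ≤ b ∧ b ≤ s.length ∧ frag s a b = t) ∧
    (occ T t).ncard = (occ T s).ncard}

/-- `IsExt T t e` says that `e` is a longest string in `S_t`, i.e. `e = ext(t)`. -/
def IsExt {α : Type*} (T t e : List α) : Prop :=
  e ∈ Sset T t ∧ ∀ s ∈ Sset T t, s.length ≤ e.length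

/-- `IsPos T t (l, r)` says that `(l, r) = pos(t)`, the first occurrence of `t` in `T`. -/
def IsPos {α : Type*} (T t : List α) (p : ℕ × ℕ) : Prop :=
  p ∈ occ T t ∧ ∀ q ∈ occ T t, p.1 ≤ q.1

lemma frag_length {α : Type*} (T : List α) {i j : ℕ} (h1 : 1 ≤ i) (h2 : i ≤ j)
    (h3 : j ≤ T.length) : (frag T i j).length = j - i + 1 := by
  simp [frag]; omega

lemma frag_frag {α : Type*} (T : List α) {i j a b : ℕ} (hi : 1 ≤ i) (hij : i ≤ j)
    (ha : 1 ≤ a) (hab : a ≤ b) (hb : b ≤ j - i + 1) :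
    frag (frag T i j) a b = frag T (i + a - 1) (i + b - 1) := by
  unfold frag
  rw [List.drop_take, List.take_take, List.drop_drop]
  have h1 : min (b - a + 1) (j - i + 1 - (a - 1)) = i + b - 1 - (i + a - 1) + 1 := by omega
  have h2 : i - 1 + (a - 1) = i + a - 1 - 1 := by omega
  rw [h1, h2]

lemma occ_finite {α : Type*} (T t : List α) : (occ T t).Finite := by
  apply Set.Finite.subset (Set.finite_Icc (1, 1) (T.length, T.length))
  rintro ⟨p, q⟩ ⟨h1, h2, h3, -⟩
  simp only [Set.mem_Icc, Prod.mk_le_mk]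
  omega

lemma occ_snd {α : Type*} {T t : List α} {p q : ℕ} (h : (p, q) ∈ occ T t) :
    q + 1 = p + t.length := by
  obtain ⟨h1, h2, h3, h4⟩ := h
  have := frag_length T h1 h2 h3
  rw [h4] at this
  omega

lemma occ_shift {α : Type*} {T t : List α} {p q a b : ℕ} (h : (p, q) ∈ occ T t)
    (ha : 1 ≤ a) (hab : a ≤ b) (hb : b ≤ t.length) :
    (p + a - 1, p + b - 1) ∈ occ T (frag t a b) := by
  have hq := occ_snd h
  obtain ⟨h1, h2, h3, h4⟩ := h
  refine ⟨by omega, by omega, by omega, ?_⟩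
  rw [← h4, frag_frag T h1 h2 ha hab (by omega)]

lemma occ_ncard_le {α : Type*} (T : List α) {t : List α} {a b : ℕ}
    (ha : 1 ≤ a) (hab : a ≤ b) (hb : b ≤ t.length) :
    (occ T t).ncard ≤ (occ T (frag t a b)).ncard := by
  refine Set.ncard_le_ncard_of_injOn (fun p => (p.1 + a - 1, p.1 + b - 1)) ?_ ?_ (occ_finite T _)
  · rintro ⟨p, q⟩ hp
    exact occ_shift hp ha hab hb
  · rintro ⟨p1, q1⟩ h1 ⟨p2, q2⟩ h2 heq
    have e1 := occ_snd h1
    have e2 := occ_snd h2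
    simp only [Prod.mk.injEq] at heq ⊢
    omega

lemma ext_mono {α : Type*} {T e : List α} (hsub : IsSub T e) (hrep : IsExt T e e)
    {l' r' L R L₂ R₂ : ℕ} (hocc : (l', r') ∈ occ T e)
    (h1 : l' ≤ L₂) (h2 : L₂ ≤ L) (h3 : L ≤ R) (h4 : R ≤ R₂) (h5 : R₂ ≤ r')
    (hLR : IsExt T (frag T L R) e) : IsExt T (frag T L₂ R₂) e := by
  obtain ⟨hl1, hlr, hrn, hf⟩ := hocc
  have hel : e.length = r' - l' + 1 := by rw [← hf, frag_length T hl1 hlr hrn]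
  have he2 : frag e (L₂ - l' + 1) (R₂ - l' + 1) = frag T L₂ R₂ := by
    rw [← hf, frag_frag T hl1 hlr (by omega) (by omega) (by omega)]
    congr 1 <;> omega
  have ht2 : frag (frag T L₂ R₂) (L - L₂ + 1) (R - L₂ + 1) = frag T L R := by
    rw [frag_frag T (show 1 ≤ L₂ by omega) (show L₂ ≤ R₂ by omega) (by omega) (by omega)
      (by omega)]
    congr 1 <;> omega
  have t2len : (frag T L₂ R₂).length = R₂ - L₂ + 1 :=
    frag_length T (by omega) (by omega) (by omega)
  have c1 : (occ T e).ncard ≤ (occ T (frag T L₂ R₂)).ncard := by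
    rw [← he2]
    exact occ_ncard_le T (by omega) (by omega) (by omega)
  have c2 : (occ T (frag T L₂ R₂)).ncard ≤ (occ T (frag T L R)).ncard := by
    rw [← ht2]
    exact occ_ncard_le T (by omega) (by omega) (by omega)
  have c3 : (occ T (frag T L R)).ncard = (occ T e).ncard := hLR.1.2.2
  have eq2 : (occ T (frag T L₂ R₂)).ncard = (occ T e).ncard := by omega
  constructor
  · exact ⟨hsub, ⟨L₂ - l' + 1, R₂ - l' + 1, by omega, by omega, by omega, he2⟩, eq2⟩
  · intro s hs
    obtain ⟨hsS, ⟨a, b, ha, hab, hb, hfs⟩, hcard⟩ := hs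
    have hba : b - a + 1 = R₂ - L₂ + 1 := by
      have := frag_length s ha hab hb
      rw [hfs, t2len] at this
      omega
    rw [← hfs] at ht2
    rw [frag_frag s ha hab (show 1 ≤ L - L₂ + 1 by omega) (by omega) (by omega)] at ht2
    have hts : frag s (a + L - L₂) (a + R - L₂) = frag T L R := by
      rw [show a + L - L₂ = a + (L - L₂ + 1) - 1 by omega,
        show a + R - L₂ = a + (R - L₂ + 1) - 1 by omega]
      exact ht2
    exact hLR.2 s ⟨hsS, ⟨a + L - L₂, a + R - L₂, by omega, by omega, by omega, hts⟩, by omega⟩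

/-- Let `e` be a substring of `T` with `ext(e) = e` and `(l', r') = pos(e)`, and let
`B = { (L, R) : l' ≤ L ≤ R ≤ r', ext(T[L, R]) = e }`. Then `(l', r') ∈ B`; `B` is a
staircase-shaped set, i.e. there are `l ≤ r`, `b` and a nondecreasing sequence
`A_l ≤ ⋯ ≤ A_r` with `A_r ≤ b` such that `B = {(x, y) : l ≤ x ≤ r, A_x ≤ y ≤ b}`;
and equivalently, whenever `(L, R) ∈ B` and `l' ≤ L₂ ≤ L ≤ R ≤ R₂ ≤ r'`, we have
`(L₂, R₂) ∈ B`. -/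
theorem staircase {α : Type*} (T e : List α) (hsub : IsSub T e) (hrep : IsExt T e e)
    (l' r' : ℕ) (hp : IsPos T e (l', r'))
    (B : Set (ℕ × ℕ))
    (hB : B = {p : ℕ × ℕ | l' ≤ p.1 ∧ p.1 ≤ p.2 ∧ p.2 ≤ r' ∧ IsExt T (frag T p.1 p.2) e}) :
    (l', r') ∈ B ∧
    (∃ l r b : ℕ, ∃ A : ℕ → ℕ, l ≤ r ∧
      (∀ x y : ℕ, l ≤ x → x ≤ y → y ≤ r → A x ≤ A y) ∧ A r ≤ b ∧
      B = {p : ℕ × ℕ | l ≤ p.1 ∧ p.1 ≤ r ∧ A p.1 ≤ p.2 ∧ p.2 ≤ b}) ∧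
    (∀ L R L₂ R₂ : ℕ, (L, R) ∈ B → l' ≤ L₂ → L₂ ≤ L → L ≤ R → R ≤ R₂ → R₂ ≤ r' →
      (L₂, R₂) ∈ B) := by
  have hocc := hp.1
  have hmem : (l', r') ∈ B := by
    rw [hB]
    refine ⟨le_refl _, hocc.2.1, le_refl _, ?_⟩
    rw [hocc.2.2.2]
    exact hrep
  have hmono : ∀ L R L₂ R₂ : ℕ, (L, R) ∈ B → l' ≤ L₂ → L₂ ≤ L → L ≤ R → R ≤ R₂ → R₂ ≤ r' →
      (L₂, R₂) ∈ B := by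
    intro L R L₂ R₂ hLR hL2 hLL hLR' hRR hR2
    rw [hB] at hLR ⊢
    obtain ⟨hb1, hb2, hb3, hb4⟩ := hLR
    exact ⟨hL2, by omega, hR2, ext_mono hsub hrep hocc hL2 hLL hLR' hRR hR2 hb4⟩
  refine ⟨hmem, ?_, hmono⟩
  -- staircase shape
  set S : Set ℕ := {x | ∃ y, (x, y) ∈ B} with hS
  have hSne : S.Nonempty := ⟨l', r', hmem⟩
  have hSbdd : BddAbove S := by
    refine ⟨r', ?_⟩
    rintro x ⟨y, hy⟩
    rw [hB] at hy
    exact hy.2.1.trans hy.2.2.1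
  set r : ℕ := sSup S with hr
  have hrS : r ∈ S := Nat.sSup_mem hSne hSbdd
  obtain ⟨yr, hyr⟩ := hrS
  have hyrB := hyr
  rw [hB] at hyrB
  have hBspec : ∀ p ∈ B, l' ≤ p.1 ∧ p.1 ≤ p.2 ∧ p.2 ≤ r' := by
    intro p hp
    rw [hB] at hp
    exact ⟨hp.1, hp.2.1, hp.2.2.1⟩
  have hcol : ∀ x, l' ≤ x → x ≤ r → (x, r') ∈ B := fun x hx1 hx2 =>
    hmono r yr x r' hyr hx1 hx2 hyrB.2.1 hyrB.2.2.1 (le_refl _)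
  have hAmem : ∀ x, l' ≤ x → x ≤ r → (x, sInf {z | (x, z) ∈ B}) ∈ B := by
    intro x hx1 hx2
    have : sInf {z | (x, z) ∈ B} ∈ {z | (x, z) ∈ B} :=
      Nat.sInf_mem ⟨r', hcol x hx1 hx2⟩
    exact this
  refine ⟨l', r, r', fun x => sInf {y | (x, y) ∈ B}, le_csSup hSbdd ⟨r', hmem⟩, ?_, ?_, ?_⟩
  · intro x y hx hxy hyr'
    have hyB := hAmem y (hx.trans hxy) hyr'
    have hyB' := hBspec _ hyB
    have : (x, sInf {z | (y, z) ∈ B}) ∈ B :=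
      hmono y _ x _ hyB hx hxy hyB'.2.1 (le_refl _) hyB'.2.2
    exact Nat.sInf_le this
  · exact Nat.sInf_le (hcol r hyrB.1 (le_refl _))
  · ext ⟨x, y⟩
    simp only [Set.mem_setOf_eq]
    constructor
    · intro hxy
      have hxyB := hBspec _ hxy
      exact ⟨hxyB.1, le_csSup hSbdd ⟨y, hxy⟩, Nat.sInf_le hxy, hxyB.2.2⟩
    · rintro ⟨hx1, hx2, hx3, hx4⟩
      have hxB := hAmem x hx1 hx2
      have hxB' := hBspec _ hxB
      exact hmono x _ x y hxB hx1 (le_refl _) hxB'.2.1 hx3 hx4
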